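/- arXiv:1508.01290 — 3 statements merged into one kernel-verified Lean document; each statement's English description precedes it below -/
import Mathlib

section
/- Let G be a finite simple bipartite graph each of whose edges lies in a cycle. For every a ∈ ℤH(G), the K-linear span of the vectors v(C) over all cycles C of G with a + h(v(C)) ∉ H(G) equals the K-linear span of the vectors v(C) over all induced (chordless) cycles C of G with a + h(v(C)) ∉ H(G). -/
open Finset

/-- The vector `h_e = δ_i + δ_j ∈ ℤ^m` associated with an edge `e = {i,j}`. -/
noncomputable def edgeVec {m : ℕ} (s : Sym2 (Fin m)) : Fin m → ℤ :=
  Sym2.lift ⟨fun i j => Pi.single i 1 + Pi.single j 1, fun _ _ => add_comm _ _⟩ s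

/-- The cycle vector `v(C) ∈ ℤ^n` of a closed walk `C`, with respect to an enumeration
`e : Fin n → Sym2 (Fin m)` of the edges of the graph: the alternating sum
`∑_t (-1)^t ε_{k_t}` where `e_{k_t}` is the `t`-th edge of `C`. -/
def cycVec {m n : ℕ} (e : Fin n → Sym2 (Fin m)) {G : SimpleGraph (Fin m)} {x : Fin m}
    (C : G.Walk x x) : Fin n → ℤ :=
  fun j => ∑ t ∈ Finset.range C.edges.length,
    if C.edges[t]? = some (e j) then (-1 : ℤ) ^ t else 0

/-- `h(v(C)) = ∑_{j ∈ V(C)} δ_j ∈ ℤ^m` for a closed walk `C`. -/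
noncomputable def suppVec {m : ℕ} {G : SimpleGraph (Fin m)} {x : Fin m}
    (C : G.Walk x x) : Fin m → ℤ :=
  ∑ u ∈ C.support.toFinset, Pi.single u 1

/-- A cycle is induced (chordless) if every edge of `G` joining two of its vertices is one
of its edges. -/
def Chordless {m : ℕ} (G : SimpleGraph (Fin m)) {x : Fin m} (C : G.Walk x x) : Prop :=
  ∀ u w : Fin m, G.Adj u w → u ∈ C.support → w ∈ C.support → s(u, w) ∈ C.edges

section Aux

variable {m n : ℕ}

noncomputable def dvec (v : Fin m) : Fin m → ℤ := Pi.single v 1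

lemma edgeVec_mk (u w : Fin m) : edgeVec s(u, w) = dvec u + dvec w := rfl

/-- alt-sign indicator vector of a list of edges -/
def fvec (e : Fin n → Sym2 (Fin m)) (L : List (Sym2 (Fin m))) : Fin n → ℤ :=
  fun j => ∑ t ∈ Finset.range L.length, if L[t]? = some (e j) then (-1 : ℤ) ^ t else 0

lemma cycVec_eq_fvec (e : Fin n → Sym2 (Fin m)) {G : SimpleGraph (Fin m)} {x : Fin m}
    (C : G.Walk x x) : cycVec e C = fvec e C.edges := rfl

lemma fvec_nil (e : Fin n → Sym2 (Fin m)) (j : Fin n) : fvec e [] j = 0 := by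
  simp [fvec]

lemma fvec_cons (e : Fin n → Sym2 (Fin m)) (a : Sym2 (Fin m)) (L : List (Sym2 (Fin m)))
    (j : Fin n) :
    fvec e (a :: L) j = (if a = e j then 1 else 0) + (-1) * fvec e L j := by
  simp only [fvec, List.length_cons, Finset.sum_range_succ']
  simp only [List.getElem?_cons_succ, List.getElem?_cons_zero, pow_succ, pow_zero,
    Option.some.injEq]
  rw [add_comm, Finset.mul_sum]
  congr 1
  apply Finset.sum_congr rfl
  intro t _
  rw [mul_ite, mul_zero]
  ring_nf

lemma fvec_singleton (e : Fin n → Sym2 (Fin m)) (a : Sym2 (Fin m)) (j : Fin n) :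
    fvec e [a] j = if a = e j then 1 else 0 := by
  rw [fvec_cons, fvec_nil]; ring

lemma fvec_append (e : Fin n → Sym2 (Fin m)) (L1 L2 : List (Sym2 (Fin m))) (j : Fin n) :
    fvec e (L1 ++ L2) j = fvec e L1 j + (-1 : ℤ) ^ L1.length * fvec e L2 j := by
  induction L1 with
  | nil => simp [fvec_nil]
  | cons a L ih =>
    rw [List.cons_append, fvec_cons, ih, fvec_cons, List.length_cons, pow_succ]
    ring

lemma fvec_rotate_one (e : Fin n → Sym2 (Fin m)) (L : List (Sym2 (Fin m)))
    (h : Even L.length) (j : Fin n) : fvec e (L.rotate 1) j = -fvec e L j := by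
  cases L with
  | nil => simp [fvec_nil]
  | cons a L =>
    rw [show (1 : ℕ) = 0 + 1 from rfl, List.rotate_cons_succ, List.rotate_zero,
      fvec_append, fvec_cons, fvec_cons, fvec_nil]
    have hodd : Odd L.length := by
      rcases Nat.even_or_odd L.length with he | ho
      · exfalso; simp [Nat.even_add_one, he] at h
      · exact ho
    rw [hodd.neg_one_pow]
    ring

lemma fvec_rotate (e : Fin n → Sym2 (Fin m)) (L : List (Sym2 (Fin m)))
    (h : Even L.length) (k : ℕ) (j : Fin n) :
    fvec e (L.rotate k) j = (-1 : ℤ) ^ k * fvec e L j := by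
  induction k with
  | zero => simp
  | succ k ih =>
    have h' : Even (L.rotate k).length := by rwa [List.length_rotate]
    rw [← List.rotate_rotate, fvec_rotate_one e _ h' j, ih, pow_succ]
    ring

end Aux

section Aux2

open SimpleGraph

variable {m n : ℕ}

lemma bip_even {G : SimpleGraph (Fin m)} (f : Fin m → Bool)
    (hf : ∀ u v, G.Adj u v → f u ≠ f v) {x y : Fin m} (W : G.Walk x y) :
    f x = f y ↔ Even W.length := by
  induction W with
  | nil => simp
  | @cons x z y h q ih =>
    have hxz := hf x z h
    rw [Walk.length_cons, Nat.even_add_one, ← ih]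
    cases hx : f x <;> cases hz : f z <;> cases hy : f y <;> simp_all

noncomputable def psumAux {G : SimpleGraph (Fin m)} :
    Bool → ∀ {x y : Fin m}, G.Walk x y → (Fin m → ℤ)
  | _, _, _, .nil => 0
  | b, _, _, .cons (u := x) (v := z) h q => (if b then edgeVec s(x, z) else 0) + psumAux (!b) q

lemma psumAux_cons {G : SimpleGraph (Fin m)} {x z y : Fin m} (b : Bool) (h : G.Adj x z)
    (q : G.Walk z y) :
    psumAux b (Walk.cons h q) = (if b then edgeVec s(x, z) else 0) + psumAux (!b) q := rfl

lemma psumAux_mem {G : SimpleGraph (Fin m)} (H : AddSubmonoid (Fin m → ℤ))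
    (hgen : ∀ s ∈ G.edgeSet, edgeVec s ∈ H) {x y : Fin m} (W : G.Walk x y) :
    ∀ b, psumAux b W ∈ H := by
  induction W with
  | nil => intro b; exact zero_mem H
  | @cons x z y h q ih =>
    intro b
    rw [psumAux_cons]
    refine H.add_mem ?_ (ih _)
    cases b
    · simpa using zero_mem H
    · simpa using hgen _ (by simpa using h)

lemma psumAux_spec {G : SimpleGraph (Fin m)} {x y : Fin m} (W : G.Walk x y) :
    psumAux true W = ((W.support.tail.map dvec).sum + dvec x)
        - (if Even W.length then dvec y else 0)
    ∧ psumAux false W = (W.support.tail.map dvec).sum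
        - (if Even W.length then 0 else dvec y) := by
  induction W with
  | nil =>
    constructor
    · show (0 : Fin m → ℤ) = _; simp
    · show (0 : Fin m → ℤ) = _; simp
  | @cons x z y h q ih =>
    obtain ⟨ihE, ihO⟩ := ih
    have hsupp : (Walk.cons h q).support.tail = z :: q.support.tail := by
      rw [Walk.support_cons, List.tail_cons]; exact q.support_eq_cons
    constructor
    · rw [psumAux_cons, if_pos rfl, Bool.not_true, ihO, hsupp, List.map_cons, List.sum_cons,
        edgeVec_mk, Walk.length_cons]
      rcases Nat.even_or_odd q.length with he | ho
      · rw [if_pos he, if_neg (by simp [Nat.even_add_one, he])]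
        abel
      · have hne := Nat.not_even_iff_odd.mpr ho
        rw [if_neg hne, if_pos (Nat.even_add_one.mpr hne)]
        abel
    · rw [psumAux_cons, if_neg (by simp), Bool.not_false, ihE, hsupp, List.map_cons,
        List.sum_cons, Walk.length_cons]
      rcases Nat.even_or_odd q.length with he | ho
      · rw [if_pos he, if_neg (by simp [Nat.even_add_one, he])]
        abel
      · have hne := Nat.not_even_iff_odd.mpr ho
        rw [if_neg hne, if_pos (Nat.even_add_one.mpr hne)]
        abel

lemma psum_closed {G : SimpleGraph (Fin m)} {u : Fin m} (D : G.Walk u u)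
    (h : Even D.length) : psumAux true D = (D.support.tail.map dvec).sum := by
  rw [(psumAux_spec D).1, if_pos h]; abel

lemma end_mem_tail {G : SimpleGraph (Fin m)} {v : Fin m} (C : G.Walk v v) (h : ¬C.Nil) :
    v ∈ C.support.tail := by
  obtain ⟨b, hadj, q, rfl⟩ := Walk.not_nil_iff.mp h
  simpa using q.end_mem_support

lemma toFinset_support_closed {G : SimpleGraph (Fin m)} {v : Fin m} (C : G.Walk v v)
    (h : ¬C.Nil) : C.support.toFinset = C.support.tail.toFinset := by
  conv_lhs => rw [Walk.support_eq_cons]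
  rw [List.toFinset_cons, Finset.insert_eq_self]
  exact List.mem_toFinset.mpr (end_mem_tail C h)

lemma suppVec_eq_tail {G : SimpleGraph (Fin m)} {v : Fin m} (C : G.Walk v v)
    (hnil : ¬C.Nil) (hnd : C.support.tail.Nodup) :
    suppVec C = (C.support.tail.map dvec).sum := by
  rw [suppVec, toFinset_support_closed C hnil]
  exact List.sum_toFinset dvec hnd

lemma edge_mem_of_length_one {G : SimpleGraph (Fin m)} {x y : Fin m} (P : G.Walk x y)
    (h : P.length = 1) : s(x, y) ∈ P.edges := by
  cases P with
  | nil => simp at h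
  | @cons x z y hadj q =>
    have hq : q.Nil := Walk.nil_iff_length_eq.mpr (by simpa using h)
    have := hq.eq
    subst this
    simp

end Aux2

open SimpleGraph

/-- Let `G` be a finite simple bipartite graph on `[m]` with edges enumerated by
`e : Fin n → Sym2 (Fin m)`, each of whose edges lies in a cycle, and let
`H = H(G) ⊆ ℤ^m` be its edge semigroup.  For every `a ∈ ℤH`, the `K`-span of the cycle
vectors `v(C)` over all cycles `C` with `a + h(v(C)) ∉ H` equals the `K`-span of the cycle
vectors `v(C)` over all induced (chordless) cycles `C` with `a + h(v(C)) ∉ H`. -/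
theorem stmt_7 (K : Type*) [Field K] (m n : ℕ) (G : SimpleGraph (Fin m))
    (hbip : ∃ f : Fin m → Bool, ∀ u v, G.Adj u v → f u ≠ f v)
    (e : Fin n → Sym2 (Fin m)) (heinj : Function.Injective e)
    (herange : ∀ s, s ∈ G.edgeSet ↔ s ∈ Set.range e)
    (hcyc : ∀ j : Fin n, ∃ (x : Fin m) (C : G.Walk x x), C.IsCycle ∧ e j ∈ C.edges)
    (H : AddSubmonoid (Fin m → ℤ))
    (hH : H = AddSubmonoid.closure (Set.range fun j => edgeVec (e j)))
    (a : Fin m → ℤ) (ha : a ∈ AddSubgroup.closure (H : Set (Fin m → ℤ))) :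
    Submodule.span K {x : Fin n → K | ∃ (p : Fin m) (C : G.Walk p p), C.IsCycle ∧
        a + suppVec C ∉ H ∧ x = fun j => ((cycVec e C j : ℤ) : K)} =
      Submodule.span K {x : Fin n → K | ∃ (p : Fin m) (C : G.Walk p p), C.IsCycle ∧
        Chordless G C ∧ a + suppVec C ∉ H ∧ x = fun j => ((cycVec e C j : ℤ) : K)} := by
  obtain ⟨f, hf⟩ := hbip
  have hgen : ∀ s ∈ G.edgeSet, edgeVec s ∈ H := by
    intro s hs
    obtain ⟨j, rfl⟩ := (herange s).mp hs
    rw [hH]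
    exact AddSubmonoid.subset_closure ⟨j, rfl⟩
  apply le_antisymm
  swap
  · apply Submodule.span_mono
    rintro x ⟨p, C, h1, _, h3, h4⟩
    exact ⟨p, C, h1, h3, h4⟩
  rw [Submodule.span_le]
  rintro x ⟨p, C, hC, hnot, rfl⟩
  have key : ∀ N (p : Fin m) (C : G.Walk p p), C.length = N → C.IsCycle →
      a + suppVec C ∉ H →
      (fun j => ((cycVec e C j : ℤ) : K)) ∈
        Submodule.span K {x : Fin n → K | ∃ (p : Fin m) (C : G.Walk p p), C.IsCycle ∧
          Chordless G C ∧ a + suppVec C ∉ H ∧ x = fun j => ((cycVec e C j : ℤ) : K)} := by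
    intro N
    induction N using Nat.strong_induction_on with
    | _ N ih =>
    intro p C hlen hC hnot
    subst hlen
    by_cases hch : Chordless G C
    · exact Submodule.subset_span ⟨p, C, hC, hch, hnot, rfl⟩
    -- C has a chord s(u,w)
    obtain ⟨u, w, hadj, hu, hw, hchord⟩ : ∃ u w, G.Adj u w ∧ u ∈ C.support ∧
        w ∈ C.support ∧ s(u, w) ∉ C.edges := by
      unfold Chordless at hch
      push_neg at hch
      obtain ⟨u, w, h1, h2, h3, h4⟩ := hch
      exact ⟨u, w, h1, h2, h3, h4⟩
    have hne : ¬ C.Nil := hC.not_nil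
    have hwt : w ∈ C.support.tail := by
      rcases List.mem_cons.mp (by rwa [Walk.support_eq_cons] at hw) with heq | h
      · rw [heq]; exact end_mem_tail C hne
      · exact h
    set C' := C.rotate u hu with hC'def
    have hC' : C'.IsCycle := hC.rotate hu
    have hrot_t := C.support_rotate u hu
    have hrot_e := C.rotate_edges u hu
    have hwt' : w ∈ C'.support.tail := hrot_t.mem_iff.mpr hwt
    have hw' : w ∈ C'.support := List.mem_of_mem_tail hwt'
    have hchord' : s(u, w) ∉ C'.edges := fun hmem => hchord (hrot_e.mem_iff.mp hmem)
    set P1 := C'.takeUntil w hw' with hP1def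
    set P2 := C'.dropUntil w hw' with hP2def
    have hspec : P1.append P2 = C' := C'.take_spec hw'
    have hsupC'tail : C'.support.tail = P1.support.tail ++ P2.support.tail := by
      rw [← hspec, Walk.tail_support_append]
    have hnd : C'.support.tail.Nodup := hC'.support_nodup
    obtain ⟨hnd1, hnd2, hdisj⟩ := List.nodup_append.mp (hsupC'tail ▸ hnd)
    have huT2 : u ∈ P2.support.tail := Walk.end_mem_tail_support_of_ne hadj.ne' P2
    have hwT1 : w ∈ P1.support.tail := Walk.end_mem_tail_support_of_ne hadj.ne P1
    have huT1 : u ∉ P1.support.tail := fun h => hdisj _ h _ huT2 rfl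
    have hwT2 : w ∉ P2.support.tail := fun h => hdisj _ hwT1 _ h rfl
    have hpath1 : P1.IsPath := by
      rw [Walk.isPath_def, Walk.support_eq_cons]
      exact List.nodup_cons.mpr ⟨huT1, hnd1⟩
    have hpath2 : P2.IsPath := by
      rw [Walk.isPath_def, Walk.support_eq_cons]
      exact List.nodup_cons.mpr ⟨hwT2, hnd2⟩
    have hedge : C'.edges = P1.edges ++ P2.edges := by
      rw [← hspec, Walk.edges_append]
    have hch1 : s(u, w) ∉ P1.edges := fun h =>
      hchord' (hedge ▸ List.mem_append_left _ h)
    have hch2 : s(u, w) ∉ P2.edges := fun h =>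
      hchord' (hedge ▸ List.mem_append_right _ h)
    have hl1 : 2 ≤ P1.length := by
      have h0 : P1.length ≠ 0 := fun h0 =>
        hadj.ne (Walk.Nil.eq (Walk.nil_iff_length_eq.mpr h0))
      have h1 : P1.length ≠ 1 := fun h1 => hch1 (edge_mem_of_length_one P1 h1)
      omega
    have hl2 : 2 ≤ P2.length := by
      have h0 : P2.length ≠ 0 := fun h0 =>
        hadj.ne' (Walk.Nil.eq (Walk.nil_iff_length_eq.mpr h0))
      have h1 : P2.length ≠ 1 := fun h1 =>
        hch2 (by rw [Sym2.eq_swap]; exact edge_mem_of_length_one P2 h1)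
      omega
    have hlen' : C'.length = P1.length + P2.length := by
      rw [← hspec, Walk.length_append]
    have hlenCC' : C.length = C'.length := by
      rw [← Walk.length_edges, ← Walk.length_edges]
      exact (hrot_e.perm.length_eq).symm
    -- the two smaller cycles
    set C1 : G.Walk u u := P1.append (Walk.cons hadj.symm Walk.nil) with hC1def
    set C2 : G.Walk u u := Walk.cons hadj P2 with hC2def
    have hC2cyc : C2.IsCycle := (Walk.cons_isCycle_iff P2 hadj).mpr ⟨hpath2, hch2⟩
    have hC1edges : C1.edges = P1.edges ++ [s(u, w)] := by
      rw [hC1def, Walk.edges_append, Walk.edges_cons, Walk.edges_nil, Sym2.eq_swap]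
    have hC1supp : C1.support = P1.support ++ [u] := by
      rw [hC1def, Walk.support_append, Walk.support_cons, Walk.support_nil, List.tail_cons]
    have hC1tail : C1.support.tail = P1.support.tail ++ [u] := by
      rw [hC1supp, List.tail_append_of_ne_nil P1.support_ne_nil]
    have hlenC1 : C1.length = P1.length + 1 := by
      rw [hC1def, Walk.length_append, Walk.length_cons, Walk.length_nil]
    have hlenC2 : C2.length = P2.length + 1 := by
      rw [hC2def, Walk.length_cons]
    have hC1cyc : C1.IsCycle := by
      rw [Walk.isCycle_def]
      refine ⟨?_, ?_, ?_⟩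
      · rw [Walk.isTrail_def, hC1edges]
        rw [List.nodup_append]
        exact ⟨hpath1.isTrail.edges_nodup, List.nodup_singleton _,
          fun s hs t ht => by rw [List.mem_singleton] at ht; subst ht; rintro rfl; exact hch1 hs⟩
      · intro hnil
        have := congrArg Walk.length hnil
        rw [hlenC1, Walk.length_nil] at this
        omega
      · rw [hC1tail, List.nodup_append]
        exact ⟨hnd1, List.nodup_singleton _,
          fun s hs t ht => by rw [List.mem_singleton] at ht; subst ht; rintro rfl; exact huT1 hs⟩
    -- parities
    have hevenC : Even C.length := (bip_even f hf C).mp rfl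
    have hevenC' : Even C'.length := hlenCC' ▸ hevenC
    have hevenC1 : Even C1.length := (bip_even f hf C1).mp rfl
    have hevenC2 : Even C2.length := (bip_even f hf C2).mp rfl
    -- support vector computations
    have hC1nil : ¬ C1.Nil := by
      rw [Walk.not_nil_iff_lt_length, hlenC1]; omega
    have hC2nil : ¬ C2.Nil := by
      rw [Walk.not_nil_iff_lt_length, hlenC2]; omega
    have hC2tail : C2.support.tail = P2.support := by
      rw [hC2def, Walk.support_cons, List.tail_cons]
    have hsup1 : suppVec C1 = (P1.support.tail.map dvec).sum + dvec u := by
      rw [suppVec_eq_tail C1 hC1nil (hC1cyc.support_nodup), hC1tail, List.map_append,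
        List.sum_append, List.map_singleton, List.sum_singleton]
    have hsup2 : suppVec C2 = dvec w + (P2.support.tail.map dvec).sum := by
      rw [suppVec_eq_tail C2 hC2nil (hC2cyc.support_nodup), hC2tail]
      conv_lhs => rw [Walk.support_eq_cons]
      rw [List.map_cons, List.sum_cons]
    have hsupC' : suppVec C' = (P1.support.tail.map dvec).sum
        + (P2.support.tail.map dvec).sum := by
      rw [suppVec_eq_tail C' hC'.not_nil hnd, hsupC'tail, List.map_append, List.sum_append]
    have hsuppCC' : suppVec C = suppVec C' := by
      unfold suppVec
      rw [toFinset_support_closed C hne, toFinset_support_closed C' hC'.not_nil,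
        List.toFinset_eq_of_perm _ _ hrot_t.perm]
    -- matching decompositions
    have hq2 : psumAux false P2 = suppVec C2 - edgeVec s(u, w) := by
      have h1 : psumAux true C2 = (C2.support.tail.map dvec).sum :=
        psum_closed C2 hevenC2
      have h2 : psumAux true C2 = edgeVec s(u, w) + psumAux false P2 := by
        rw [hC2def, psumAux_cons, if_pos rfl, Bool.not_true]
      rw [suppVec_eq_tail C2 hC2nil (hC2cyc.support_nodup), ← h1, h2]
      abel
    set D : G.Walk u u := Walk.cons hadj P1.reverse with hDdef
    have hlenD : D.length = P1.length + 1 := by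
      rw [hDdef, Walk.length_cons, Walk.length_reverse]
    have hevenD : Even D.length := by rw [hlenD, ← hlenC1]; exact hevenC1
    have hq1 : psumAux false P1.reverse = suppVec C1 - edgeVec s(u, w) := by
      have h1 : psumAux true D = (D.support.tail.map dvec).sum := psum_closed D hevenD
      have h2 : psumAux true D = edgeVec s(u, w) + psumAux false P1.reverse := by
        rw [hDdef, psumAux_cons, if_pos rfl, Bool.not_true]
      have h3 : (D.support.tail.map dvec).sum = (P1.support.map dvec).sum := by
        rw [hDdef, Walk.support_cons, List.tail_cons, Walk.support_reverse,
          List.map_reverse, List.sum_reverse]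
      have h4 : (P1.support.map dvec).sum = suppVec C1 := by
        rw [hsup1, Walk.support_eq_cons, List.map_cons, List.sum_cons]
        abel
      rw [← h4, ← h3, ← h1, h2]
      abel
    have hm2 : psumAux false P2 ∈ H := psumAux_mem H hgen P2 false
    have hm1 : psumAux false P1.reverse ∈ H := psumAux_mem H hgen P1.reverse false
    -- non-membership for the two halves
    have hkey : a + suppVec C = (a + suppVec C1) + psumAux false P2 := by
      rw [hsuppCC', hsupC', hsup1, hq2, hsup2, edgeVec_mk]
      abel
    have hkey' : a + suppVec C = (a + suppVec C2) + psumAux false P1.reverse := by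
      rw [hsuppCC', hsupC', hsup2, hq1, hsup1, edgeVec_mk]
      abel
    have hnot1 : a + suppVec C1 ∉ H := fun hmem => hnot (hkey ▸ H.add_mem hmem hm2)
    have hnot2 : a + suppVec C2 ∉ H := fun hmem => hnot (hkey' ▸ H.add_mem hmem hm1)
    -- induction hypotheses
    have mem1 := ih C1.length (by omega) u C1 rfl hC1cyc hnot1
    have mem2 := ih C2.length (by omega) u C2 rfl hC2cyc hnot2
    -- cycle vector identity
    have hC2edges : C2.edges = s(u, w) :: P2.edges := by
      rw [hC2def, Walk.edges_cons]
    have hveo : ∀ j, fvec e C'.edges j = fvec e C1.edges j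
        + (-(-1 : ℤ) ^ P1.edges.length) * fvec e C2.edges j := by
      intro j
      rw [hedge, hC1edges, hC2edges, fvec_append, fvec_append, fvec_singleton, fvec_cons]
      ring
    obtain ⟨k, hk⟩ := hrot_e
    have hevenE : Even C'.edges.length := by rw [Walk.length_edges]; exact hevenC'
    have hvC : ∀ j, cycVec e C j = (-1 : ℤ) ^ k *
        (cycVec e C1 j + (-(-1 : ℤ) ^ P1.edges.length) * cycVec e C2 j) := by
      intro j
      have : cycVec e C j = fvec e C.edges j := rfl
      rw [this, ← hk, fvec_rotate e _ hevenE k j, hveo j]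
      rfl
    have hfinal : (fun j => ((cycVec e C j : ℤ) : K)) =
        ((-1 : K) ^ k) • (fun j => ((cycVec e C1 j : ℤ) : K))
        + ((-1 : K) ^ k * (-(-1 : K) ^ P1.edges.length)) •
            (fun j => ((cycVec e C2 j : ℤ) : K)) := by
      funext j
      have := congrArg (fun z : ℤ => (z : K)) (hvC j)
      push_cast at this
      simpa [Pi.add_apply, Pi.smul_apply, smul_eq_mul, mul_add, mul_assoc] using this
    rw [hfinal]
    exact Submodule.add_mem _ (Submodule.smul_mem _ _ mem1) (Submodule.smul_mem _ _ mem2)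
  exact key C.length p C rfl hC hnot
end

section
/- Let G be a finite simple bipartite graph, C a cycle of G, and e_j an edge of G. Then Σ_{k ∈ V(C)} δ_k − h_j ∈ H(G) if and only if both endpoints of e_j belong to V(C). -/
open Finset

noncomputable def sig {m : ℕ} (l : List (Fin m)) : Fin m → ℤ :=
  (l.map fun v => (Pi.single v (1 : ℤ) : Fin m → ℤ)).sum

@[simp] lemma sig_nil {m : ℕ} : sig ([] : List (Fin m)) = 0 := rfl

@[simp] lemma sig_cons {m : ℕ} (a : Fin m) (l : List (Fin m)) :
    sig (a :: l) = Pi.single a 1 + sig l := by simp [sig]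

lemma sig_append {m : ℕ} (l₁ l₂ : List (Fin m)) :
    sig (l₁ ++ l₂) = sig l₁ + sig l₂ := by simp [sig]

lemma edgeVec_nonneg {m : ℕ} (s : Sym2 (Fin m)) (i : Fin m) : 0 ≤ edgeVec s i := by
  induction s using Sym2.ind with
  | _ a b =>
    simp only [edgeVec, Sym2.lift_mk, Pi.add_apply, Pi.single_apply]
    split_ifs <;> norm_num

lemma even_walk {m : ℕ} {G : SimpleGraph (Fin m)} {S : AddSubmonoid (Fin m → ℤ)}
    (hS : ∀ a b : Fin m, G.Adj a b → (Pi.single a 1 + Pi.single b 1 : Fin m → ℤ) ∈ S) :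
    ∀ (L : ℕ) {a b : Fin m} (R : G.Walk a b), R.length = L → Even L →
      sig R.support.dropLast ∈ S := by
  intro L
  induction L using Nat.strong_induction_on with
  | _ L ih =>
    intro a b R hlen heven
    cases R with
    | nil => simpa [sig] using S.zero_mem
    | @cons _ v _ h R' =>
      cases R' with
      | nil =>
        simp only [SimpleGraph.Walk.length_cons, SimpleGraph.Walk.length_nil] at hlen
        rcases heven with ⟨c, hc⟩; omega
      | @cons _ v' _ h' R'' =>
        simp only [SimpleGraph.Walk.length_cons] at hlen
        have hne : R''.support ≠ [] := R''.support_ne_nil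
        have hdrop : ((SimpleGraph.Walk.cons h (SimpleGraph.Walk.cons h' R'')).support).dropLast
            = a :: v :: R''.support.dropLast := by
          rw [SimpleGraph.Walk.support_cons, SimpleGraph.Walk.support_cons]
          rcases hl : R''.support with _ | ⟨c, l⟩
          · exact absurd hl hne
          · simp
        rw [hdrop, sig_cons, sig_cons, ← add_assoc]
        refine add_mem (hS a v h) (ih R''.length (by omega) R'' rfl ?_)
        rcases heven with ⟨c, hc⟩
        exact ⟨c - 1, by omega⟩

lemma closure_nonneg {m n : ℕ} {e : Fin n → Sym2 (Fin m)} :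
    ∀ v ∈ AddSubmonoid.closure (Set.range fun j => edgeVec (e j)), ∀ i, 0 ≤ v i := by
  intro v hv i
  induction hv using AddSubmonoid.closure_induction with
  | mem y hy => obtain ⟨k, rfl⟩ := hy; exact edgeVec_nonneg _ i
  | zero => simp
  | add y z hy hz ihy ihz => simpa [Pi.add_apply] using add_nonneg ihy ihz

lemma walk_parity {m : ℕ} {G : SimpleGraph (Fin m)} {f : Fin m → Bool}
    (hf : ∀ u v, G.Adj u v → f u ≠ f v) :
    ∀ {a b : Fin m} (R : G.Walk a b), (f a = f b ↔ Even R.length) := by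
  intro a b R
  induction R with
  | nil => simp
  | @cons a v b h R ih =>
    have hav := hf _ _ h
    rw [SimpleGraph.Walk.length_cons, Nat.even_add_one, ← ih]
    cases hfa : f a <;> cases hfv : f v <;> cases hfb : f b <;> simp_all

/-- Let `G` be a finite simple bipartite graph with edges enumerated by
`e : Fin n → Sym2 (Fin m)`, `C` a cycle of `G` and `e j` an edge of `G`.  Then
`∑_{k ∈ V(C)} δ_k - h_j ∈ H(G)` if and only if both endpoints of `e j` belong to `V(C)`. -/
theorem stmt_8 (m n : ℕ) (G : SimpleGraph (Fin m))
    (hbip : ∃ f : Fin m → Bool, ∀ u v, G.Adj u v → f u ≠ f v)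
    (e : Fin n → Sym2 (Fin m)) (heinj : Function.Injective e)
    (herange : ∀ s, s ∈ G.edgeSet ↔ s ∈ Set.range e)
    (H : AddSubmonoid (Fin m → ℤ))
    (hH : H = AddSubmonoid.closure (Set.range fun j => edgeVec (e j)))
    (j : Fin n) (x : Fin m) (C : G.Walk x x) (hC : C.IsCycle) :
    suppVec C - edgeVec (e j) ∈ H ↔ ∀ u ∈ e j, u ∈ C.support := by
  subst hH
  obtain ⟨f, hf⟩ := hbip
  obtain ⟨u, w, huw⟩ : ∃ u w, e j = s(u, w) := by
    induction e j using Sym2.ind with | _ a b => exact ⟨a, b, rfl⟩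
  have hadj : G.Adj u w := by
    have h1 : e j ∈ G.edgeSet := (herange (e j)).mpr ⟨j, rfl⟩
    rw [huw, SimpleGraph.mem_edgeSet] at h1
    exact h1
  constructor
  · -- forward: membership implies endpoints on the cycle
    intro hmem u' hu'
    by_contra hns
    have hpos : ∀ i, 0 ≤ (suppVec C - edgeVec (e j)) i := closure_nonneg _ hmem
    have h1 : suppVec C u' = 0 := by
      rw [suppVec, Finset.sum_apply]
      refine Finset.sum_eq_zero fun v hv => ?_
      have hvne : u' ≠ v := fun h => hns (h ▸ List.mem_toFinset.mp hv)
      exact Pi.single_eq_of_ne hvne _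
    have h2 : 1 ≤ edgeVec (e j) u' := by
      rw [huw] at hu'
      rcases Sym2.mem_iff.mp hu' with rfl | rfl <;>
        · rw [huw]
          simp only [edgeVec, Sym2.lift_mk, Pi.add_apply, Pi.single_apply]
          split_ifs <;> omega
    have := hpos u'
    rw [Pi.sub_apply, h1] at this
    omega
  · -- backward
    intro hend
    have hS : ∀ a b : Fin m, G.Adj a b →
        (Pi.single a 1 + Pi.single b 1 : Fin m → ℤ) ∈
          AddSubmonoid.closure (Set.range fun j => edgeVec (e j)) := by
      intro a b hab
      obtain ⟨k, hk⟩ := (herange s(a, b)).mp (G.mem_edgeSet.mpr hab)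
      apply AddSubmonoid.subset_closure
      exact ⟨k, by show edgeVec (e k) = _; rw [hk]; simp [edgeVec]⟩
    have hu : u ∈ C.support := hend u (by rw [huw]; simp)
    have hrot := C.support_rotate u hu
    have hDc : (C.rotate u hu).IsCycle := hC.rotate hu
    have hxt : x ∈ C.support.tail := by
      obtain ⟨v, ha, C', hC'⟩ := SimpleGraph.Walk.not_nil_iff.mp hC.not_nil
      rw [hC', SimpleGraph.Walk.support_cons, List.tail_cons]
      exact C'.end_mem_support
    have hfin : C.support.toFinset = (C.rotate u hu).support.tail.toFinset := by
      ext v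
      simp only [List.mem_toFinset]
      rw [hrot.mem_iff]
      constructor
      · intro hv
        rcases (SimpleGraph.Walk.mem_support_iff C).mp hv with rfl | h
        exacts [hxt, h]
      · exact fun h => List.mem_of_mem_tail h
    have hsupp : suppVec C = sig (C.rotate u hu).support.tail := by
      rw [suppVec, hfin]
      exact List.sum_toFinset _ hDc.support_nodup
    have hwD : w ∈ (C.rotate u hu).support := by
      have hwC : w ∈ C.support := hend w (by rw [huw]; simp)
      have hwt : w ∈ C.support.tail := by
        rcases (SimpleGraph.Walk.mem_support_iff C).mp hwC with rfl | h
        exacts [hxt, h]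
      exact List.mem_of_mem_tail (hrot.mem_iff.mpr hwt)
    have hspec := (C.rotate u hu).take_spec hwD
    set P := (C.rotate u hu).takeUntil w hwD with hPdef
    set Q := (C.rotate u hu).dropUntil w hwD with hQdef
    have htail : (C.rotate u hu).support.tail = P.support.tail ++ Q.support.tail := by
      conv_lhs => rw [← hspec]
      exact SimpleGraph.Walk.tail_support_append P Q
    -- parities
    have hfuw : f u ≠ f w := hf u w hadj
    have hPodd : Odd P.length := by
      rw [Nat.odd_iff]
      have := walk_parity hf P
      rcases Nat.even_or_odd P.length with he | ho
      · exact absurd (this.mpr he) hfuw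
      · exact Nat.odd_iff.mp ho
    have hQodd : Odd Q.length := by
      rw [Nat.odd_iff]
      have := walk_parity hf Q
      rcases Nat.even_or_odd Q.length with he | ho
      · exact absurd (this.mpr he) (Ne.symm hfuw)
      · exact Nat.odd_iff.mp ho
    -- destructure P and Q
    have hPnn : ¬ P.Nil := by
      rw [SimpleGraph.Walk.nil_iff_length_eq]
      rcases hPodd with ⟨c, hc⟩; omega
    have hQnn : ¬ Q.Nil := by
      rw [SimpleGraph.Walk.nil_iff_length_eq]
      rcases hQodd with ⟨c, hc⟩; omega
    obtain ⟨v1, ha1, P', hP'⟩ := SimpleGraph.Walk.not_nil_iff.mp hPnn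
    obtain ⟨v2, ha2, Q', hQ'⟩ := SimpleGraph.Walk.not_nil_iff.mp hQnn
    have hP'even : Even P'.length := by
      rcases hPodd with ⟨c, hc⟩
      rw [hP', SimpleGraph.Walk.length_cons] at hc
      exact ⟨c, by omega⟩
    have hQ'even : Even Q'.length := by
      rcases hQodd with ⟨c, hc⟩
      rw [hQ', SimpleGraph.Walk.length_cons] at hc
      exact ⟨c, by omega⟩
    have hsplit : ∀ {a b : Fin m} (R : G.Walk a b),
        sig R.support = sig R.support.dropLast + Pi.single b 1 := by
      intro a b R
      conv_lhs => rw [← List.dropLast_concat_getLast R.support_ne_nil]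
      rw [sig_append, R.getLast_support]
      simp [sig]
    have hPsig : sig P.support.tail = sig P'.support.dropLast + Pi.single w 1 := by
      rw [hP', SimpleGraph.Walk.support_cons, List.tail_cons, hsplit P']
    have hQsig : sig Q.support.tail = sig Q'.support.dropLast + Pi.single u 1 := by
      rw [hQ', SimpleGraph.Walk.support_cons, List.tail_cons, hsplit Q']
    have hedge : edgeVec (e j) = Pi.single u 1 + Pi.single w 1 := by
      rw [huw]; simp [edgeVec]
    rw [hsupp, htail, sig_append, hPsig, hQsig, hedge]
    have heq : sig P'.support.dropLast + Pi.single w 1 +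
        (sig Q'.support.dropLast + Pi.single u 1) -
        ((Pi.single u 1 : Fin m → ℤ) + Pi.single w 1) =
        sig P'.support.dropLast + sig Q'.support.dropLast := by abel
    rw [heq]
    exact add_mem (even_walk hS P'.length P' rfl hP'even)
      (even_walk hS Q'.length Q' rfl hQ'even)
end

section
/- Let n ≥ 3 and H = H(G_n) ⊆ ℤ^{2n}. For a = Σ_i a_i δ_i ∈ ℤ^{2n}: (a) a ∈ ℤH if and only if a_e = a_o; (b) a ∈ H if and only if a_e = a_o, ℓ(a) ≤ r(a), and a_i ≥ 0 for all i ∈ {1,…,2n}. -/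
namespace Stmt15X

def S (m : ℕ) : Set (Fin m → ℤ) :=
  {x | ∃ i j : Fin m, (i.val + j.val) % 2 = 1 ∧
    ¬(i.val = 0 ∧ j.val = m-1) ∧ ¬(j.val = 0 ∧ i.val = m-1) ∧
    x = Pi.single i 1 + Pi.single j 1}

variable {m : ℕ}

lemma sum_single (i : Fin m) (s : Finset (Fin m)) :
    ∑ k ∈ s, Pi.single i (1:ℤ) k = if i ∈ s then 1 else 0 := by
  simp [Pi.single_apply]

lemma sum_pair_eval (i j : Fin m) (s : Finset (Fin m)) :
    ∑ k ∈ s, ((Pi.single i 1 : Fin m → ℤ) k + (Pi.single j 1 : Fin m → ℤ) k)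
      = (if i ∈ s then 1 else 0) + (if j ∈ s then 1 else 0) := by
  rw [Finset.sum_add_distrib, sum_single, sum_single]

lemma gen_prop (hm : 6 ≤ m) (hm2 : m % 2 = 0) {i0 iL : Fin m}
    (hi0 : i0.val = 0) (hiL : iL.val = m-1) {x : Fin m → ℤ} (hx : x ∈ S m) :
    (∑ i ∈ Finset.univ.filter (fun i : Fin m => i.val % 2 = 1), x i
      = ∑ i ∈ Finset.univ.filter (fun i : Fin m => i.val % 2 = 0), x i) ∧
    x i0 + x iL ≤
      ∑ i ∈ Finset.univ.filter (fun i : Fin m => i.val ≠ 0 ∧ i.val ≠ m-1), x i ∧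
    ∀ i, 0 ≤ x i := by
  obtain ⟨i, j, hpar, hex1, hex2, rfl⟩ := hx
  refine ⟨?_, ?_, ?_⟩
  · simp only [Pi.add_apply]
    rw [sum_pair_eval, sum_pair_eval]
    simp only [Finset.mem_filter, Finset.mem_univ, true_and]
    split_ifs <;> omega
  · simp only [Pi.add_apply]
    rw [sum_pair_eval]
    simp only [Pi.single_apply, Finset.mem_filter, Finset.mem_univ, true_and, Fin.ext_iff,
      hi0, hiL]
    have hi : i.val < m := i.isLt
    have hj : j.val < m := j.isLt
    split_ifs <;> omega
  · intro k
    simp only [Pi.add_apply, Pi.single_apply]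
    split_ifs <;> omega

lemma split_parity (a : Fin m → ℤ) :
    ∑ i, a i = (∑ i ∈ Finset.univ.filter (fun i : Fin m => i.val % 2 = 1), a i)
      + ∑ i ∈ Finset.univ.filter (fun i : Fin m => i.val % 2 = 0), a i := by
  rw [← Finset.sum_filter_add_sum_filter_not Finset.univ (fun i : Fin m => i.val % 2 = 1)]
  congr 1
  refine Finset.sum_congr (Finset.filter_congr ?_) (fun _ _ => rfl)
  intro i _; omega

lemma ends_filter (hm : 6 ≤ m) {i0 iL : Fin m} (hi0 : i0.val = 0) (hiL : iL.val = m-1) :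
    Finset.univ.filter (fun i : Fin m => ¬(i.val ≠ 0 ∧ i.val ≠ m-1)) = {i0, iL} := by
  ext i
  simp only [Finset.mem_filter, Finset.mem_univ, true_and, Finset.mem_insert,
    Finset.mem_singleton, Fin.ext_iff, hi0, hiL]
  omega

lemma split_ends (hm : 6 ≤ m) {i0 iL : Fin m} (hi0 : i0.val = 0) (hiL : iL.val = m-1)
    (a : Fin m → ℤ) :
    ∑ i, a i = (a i0 + a iL)
      + ∑ i ∈ Finset.univ.filter (fun i : Fin m => i.val ≠ 0 ∧ i.val ≠ m-1), a i := by
  rw [← Finset.sum_filter_add_sum_filter_not Finset.univ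
    (fun i : Fin m => i.val ≠ 0 ∧ i.val ≠ m-1), add_comm]
  congr 1
  rw [ends_filter hm hi0 hiL, Finset.sum_pair (by simp [Fin.ext_iff, hi0, hiL]; omega)]

lemma range_sum_parity (n r : ℕ) (hr : r < 2) :
    ∑ k ∈ Finset.range (2*n), (if k % 2 = r then 1 else 0) = n := by
  induction n with
  | zero => simp
  | succ n ih =>
    have h2 : 2 * (n+1) = (2*n) + 1 + 1 := by ring
    rw [h2, Finset.sum_range_succ, Finset.sum_range_succ, ih]
    obtain h | h : r = 0 ∨ r = 1 := by omega
    all_goals subst h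
    all_goals {
      have h1 : (2*n) % 2 = 0 := by omega
      have h3 : (2*n+1) % 2 = 1 := by omega
      simp [h1, h3] }

lemma card_parity (n r : ℕ) (hr : r < 2) :
    (Finset.univ.filter (fun i : Fin (2*n) => i.val % 2 = r)).card = n := by
  rw [Finset.card_filter,
    Fin.sum_univ_eq_sum_range (fun i => if i % 2 = r then 1 else 0) (2*n),
    range_sum_parity n r hr]

lemma card_mid (hm : 6 ≤ m) {i0 iL : Fin m} (hi0 : i0.val = 0) (hiL : iL.val = m-1) :
    (Finset.univ.filter (fun i : Fin m => i.val ≠ 0 ∧ i.val ≠ m-1)).card = m - 2 := by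
  have h := Finset.card_filter_add_card_filter_not
    (s := (Finset.univ : Finset (Fin m))) (p := fun i : Fin m => i.val ≠ 0 ∧ i.val ≠ m-1)
  rw [ends_filter hm hi0 hiL] at h
  have h2 : ({i0, iL} : Finset (Fin m)).card = 2 := by
    rw [Finset.card_pair (by simp [Fin.ext_iff, hi0, hiL]; omega)]
  rw [h2, Finset.card_univ, Fintype.card_fin] at h
  omega

lemma exists_pos {s : Finset (Fin m)} {a : Fin m → ℤ} (h : 0 < ∑ i ∈ s, a i) :
    ∃ i ∈ s, 1 ≤ a i := by
  by_contra hc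
  push_neg at hc
  have h1 : ∑ i ∈ s, a i ≤ 0 := Finset.sum_nonpos fun i hi => by
    have h2 := hc i hi; omega
  exact absurd h h1.not_gt

lemma eq_zero_of (a : Fin m → ℤ) (h : ∑ i, a i ≤ 0) (hpos : ∀ i, 0 ≤ a i) : a = 0 := by
  have h0 : ∑ i, a i = 0 := le_antisymm h (Finset.sum_nonneg fun i _ => hpos i)
  funext i
  exact (Finset.sum_eq_zero_iff_of_nonneg (fun i _ => hpos i)).mp h0 i (Finset.mem_univ i)

set_option maxHeartbeats 1000000 in
lemma key (hm : 6 ≤ m) (hm2 : m % 2 = 0) {i0 iL : Fin m}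
    (hi0 : i0.val = 0) (hiL : iL.val = m-1) (N : ℕ) :
    ∀ a : Fin m → ℤ, (∑ i, a i).toNat ≤ N →
    (∑ i ∈ Finset.univ.filter (fun i : Fin m => i.val % 2 = 1), a i
      = ∑ i ∈ Finset.univ.filter (fun i : Fin m => i.val % 2 = 0), a i) →
    (a i0 + a iL ≤
      ∑ i ∈ Finset.univ.filter (fun i : Fin m => i.val ≠ 0 ∧ i.val ≠ m-1), a i) →
    (∀ i, 0 ≤ a i) →
    a ∈ AddSubmonoid.closure (S m) := by
  induction N with
  | zero =>
    intro a htot heq hlr hpos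
    have h0 : ∑ i, a i ≤ 0 := by omega
    rw [eq_zero_of a h0 hpos]
    exact zero_mem _
  | succ N ih =>
    intro a htot heq hlr hpos
    by_cases hz : ∑ i, a i ≤ 0
    · rw [eq_zero_of a hz hpos]; exact zero_mem _
    push_neg at hz
    have hsp := split_parity a
    have hse := split_ends hm hi0 hiL a
    obtain ⟨p, q, hp2, hq2, hex, hap, haq, hdec⟩ :
        ∃ p q : Fin m, p.val % 2 = 0 ∧ q.val % 2 = 1 ∧ ¬(p.val = 0 ∧ q.val = m-1) ∧
          1 ≤ a p ∧ 1 ≤ a q ∧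
          a i0 + a iL ≤
            (∑ i ∈ Finset.univ.filter (fun i : Fin m => i.val ≠ 0 ∧ i.val ≠ m-1), a i) - 2
            + ((if p.val = 0 then 1 else 0) + (if q.val = m-1 then 1 else 0)) * 2 := by
      by_cases h0 : 1 ≤ a i0
      · by_cases hL : 1 ≤ a iL
        · -- both ends positive: take any positive middle coordinate
          have hrpos : 0 < ∑ i ∈ Finset.univ.filter
              (fun i : Fin m => i.val ≠ 0 ∧ i.val ≠ m-1), a i := by omega
          obtain ⟨k, hk, hak⟩ := exists_pos hrpos
          simp only [Finset.mem_filter, Finset.mem_univ, true_and] at hk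
          by_cases hk2 : k.val % 2 = 1
          · refine ⟨i0, k, by omega, hk2, by omega, h0, hak, ?_⟩
            rw [if_pos hi0, if_neg hk.2]
            omega
          · refine ⟨k, iL, by omega, by omega, by omega, hak, hL, ?_⟩
            rw [if_neg hk.1, if_pos hiL]
            omega
        · -- a vanishes at the last index
          have haL : a iL = 0 := by
            have := hpos iL; omega
          have hmem0 : i0 ∈ Finset.univ.filter (fun i : Fin m => i.val % 2 = 0) := by
            simp only [Finset.mem_filter, Finset.mem_univ, true_and]; omega
          have hSe : a i0 ≤ ∑ i ∈ Finset.univ.filter (fun i : Fin m => i.val % 2 = 0), a i :=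
            Finset.single_le_sum (fun i _ => hpos i) hmem0
          have hOpos : 0 < ∑ i ∈ Finset.univ.filter (fun i : Fin m => i.val % 2 = 1), a i := by
            omega
          obtain ⟨q, hq, haq⟩ := exists_pos hOpos
          simp only [Finset.mem_filter, Finset.mem_univ, true_and] at hq
          have hqL : q.val ≠ m - 1 := by
            intro hqv
            have hqe : q = iL := Fin.ext (by omega)
            rw [hqe] at haq; omega
          refine ⟨i0, q, by omega, hq, by omega, h0, haq, ?_⟩
          rw [if_pos hi0, if_neg hqL]
          omega
      · have ha0 : a i0 = 0 := by
          have := hpos i0; omega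
        have hmemL : iL ∈ Finset.univ.filter (fun i : Fin m => i.val % 2 = 1) := by
          simp only [Finset.mem_filter, Finset.mem_univ, true_and]; omega
        have hSo : a iL ≤ ∑ i ∈ Finset.univ.filter (fun i : Fin m => i.val % 2 = 1), a i :=
          Finset.single_le_sum (fun i _ => hpos i) hmemL
        have hEpos : 0 < ∑ i ∈ Finset.univ.filter (fun i : Fin m => i.val % 2 = 0), a i := by
          omega
        obtain ⟨p, hp, hap⟩ := exists_pos hEpos
        simp only [Finset.mem_filter, Finset.mem_univ, true_and] at hp
        have hp0 : p.val ≠ 0 := by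
          intro hpv
          have hpe : p = i0 := Fin.ext (by omega)
          rw [hpe] at hap; omega
        by_cases hL : 1 ≤ a iL
        · refine ⟨p, iL, hp, by omega, by omega, hap, hL, ?_⟩
          rw [if_neg hp0, if_pos hiL]
          omega
        · have haL : a iL = 0 := by
            have := hpos iL; omega
          have hOpos : 0 < ∑ i ∈ Finset.univ.filter (fun i : Fin m => i.val % 2 = 1), a i := by
            omega
          obtain ⟨q, hq, haq⟩ := exists_pos hOpos
          simp only [Finset.mem_filter, Finset.mem_univ, true_and] at hq
          have hqL : q.val ≠ m - 1 := by
            intro hqv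
            have hqe : q = iL := Fin.ext (by omega)
            rw [hqe] at haq; omega
          refine ⟨p, q, hp, hq, by omega, hap, haq, ?_⟩
          rw [if_neg hp0, if_neg hqL]
          omega
    -- now subtract the generator of the edge (p, q)
    have hpq : p ≠ q := by
      intro h; rw [h] at hp2; omega
    obtain ⟨b, hb⟩ : ∃ b : Fin m → ℤ, b = a - (Pi.single p 1 + Pi.single q 1) := ⟨_, rfl⟩
    have hbk : ∀ k, b k = a k - ((if k = p then 1 else 0) + (if k = q then 1 else 0)) := by
      intro k; simp [hb, Pi.single_apply]
    have hbpos : ∀ k, 0 ≤ b k := by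
      intro k
      rw [hbk k]
      by_cases h1 : k = p
      · subst h1
        rw [if_pos rfl, if_neg hpq]
        omega
      · rw [if_neg h1]
        by_cases h2 : k = q
        · subst h2
          rw [if_pos rfl]
          omega
        · rw [if_neg h2]
          have := hpos k; omega
    have hsum : ∀ s : Finset (Fin m), ∑ k ∈ s, b k
        = ∑ k ∈ s, a k - ((if p ∈ s then 1 else 0) + (if q ∈ s then 1 else 0)) := by
      intro s
      have e1 : ∑ k ∈ s, b k
          = ∑ k ∈ s, (a k - ((Pi.single p 1 : Fin m → ℤ) k + (Pi.single q 1 : Fin m → ℤ) k)) :=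
        Finset.sum_congr rfl (fun k _ => by simp [hb])
      rw [e1, Finset.sum_sub_distrib, Finset.sum_add_distrib, sum_single, sum_single]
    have hOb : ∑ i ∈ Finset.univ.filter (fun i : Fin m => i.val % 2 = 1), b i
        = (∑ i ∈ Finset.univ.filter (fun i : Fin m => i.val % 2 = 1), a i) - 1 := by
      rw [hsum]
      have h1 : p ∉ Finset.univ.filter (fun i : Fin m => i.val % 2 = 1) := by
        simp only [Finset.mem_filter, Finset.mem_univ, true_and]; omega
      have h2 : q ∈ Finset.univ.filter (fun i : Fin m => i.val % 2 = 1) := by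
        simp only [Finset.mem_filter, Finset.mem_univ, true_and]; omega
      rw [if_neg h1, if_pos h2]; ring
    have hEb : ∑ i ∈ Finset.univ.filter (fun i : Fin m => i.val % 2 = 0), b i
        = (∑ i ∈ Finset.univ.filter (fun i : Fin m => i.val % 2 = 0), a i) - 1 := by
      rw [hsum]
      have h1 : p ∈ Finset.univ.filter (fun i : Fin m => i.val % 2 = 0) := by
        simp only [Finset.mem_filter, Finset.mem_univ, true_and]; omega
      have h2 : q ∉ Finset.univ.filter (fun i : Fin m => i.val % 2 = 0) := by
        simp only [Finset.mem_filter, Finset.mem_univ, true_and]; omega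
      rw [if_pos h1, if_neg h2]; ring
    have hMb : ∑ i ∈ Finset.univ.filter (fun i : Fin m => i.val ≠ 0 ∧ i.val ≠ m-1), b i
        = (∑ i ∈ Finset.univ.filter (fun i : Fin m => i.val ≠ 0 ∧ i.val ≠ m-1), a i)
          - ((if p.val = 0 then 0 else 1) + (if q.val = m-1 then 0 else 1)) := by
      rw [hsum]
      have hpm : p.val ≠ m - 1 := by
        have := p.isLt; omega
      have hq0 : q.val ≠ 0 := by omega
      congr 1
      congr 1
      · by_cases hc : p.val = 0
        · rw [if_pos hc, if_neg (by
            simp only [Finset.mem_filter, Finset.mem_univ, true_and]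
            omega)]
        · rw [if_neg hc, if_pos (by
            simp only [Finset.mem_filter, Finset.mem_univ, true_and]
            exact ⟨hc, hpm⟩)]
      · by_cases hc : q.val = m-1
        · rw [if_pos hc, if_neg (by
            simp only [Finset.mem_filter, Finset.mem_univ, true_and]
            omega)]
        · rw [if_neg hc, if_pos (by
            simp only [Finset.mem_filter, Finset.mem_univ, true_and]
            exact ⟨hq0, hc⟩)]
    have hb0 : b i0 = a i0 - (if p.val = 0 then 1 else 0) := by
      rw [hbk]
      have h2 : i0 ≠ q := by
        intro h
        have h3 := congrArg Fin.val h
        omega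
      rw [if_neg h2, add_zero]
      by_cases hc : p.val = 0
      · rw [if_pos (show i0 = p from Fin.ext (by omega)), if_pos hc]
      · rw [if_neg (show ¬ i0 = p by
          intro h
          have h3 := congrArg Fin.val h
          omega), if_neg hc]
    have hbL : b iL = a iL - (if q.val = m-1 then 1 else 0) := by
      rw [hbk]
      have hpm : p.val ≠ m - 1 := by
        have := p.isLt; omega
      have h1 : iL ≠ p := by
        intro h
        have h3 := congrArg Fin.val h
        omega
      rw [if_neg h1, zero_add]
      by_cases hc : q.val = m-1
      · rw [if_pos (show iL = q from Fin.ext (by omega)), if_pos hc]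
      · rw [if_neg (show ¬ iL = q by
          intro h
          have h3 := congrArg Fin.val h
          omega), if_neg hc]
    have hTb : ∑ i, b i = (∑ i, a i) - 2 := by
      rw [hsum]
      simp
    have hbmem : b ∈ AddSubmonoid.closure (S m) := by
      apply ih b
      · omega
      · omega
      · rw [hb0, hbL, hMb]
        split_ifs at hdec ⊢ <;> omega
      · exact hbpos
    have hg : (Pi.single p 1 + Pi.single q 1 : Fin m → ℤ) ∈ AddSubmonoid.closure (S m) :=
      AddSubmonoid.subset_closure ⟨p, q, by omega, hex, by omega, rfl⟩
    have hab : a = b + (Pi.single p 1 + Pi.single q 1) := by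
      rw [hb]; abel
    rw [hab]
    exact AddSubmonoid.add_mem _ hbmem hg


lemma mem_prop (hm : 6 ≤ m) (hm2 : m % 2 = 0) {i0 iL : Fin m}
    (hi0 : i0.val = 0) (hiL : iL.val = m-1) {a : Fin m → ℤ}
    (ha : a ∈ AddSubmonoid.closure (S m)) :
    (∑ i ∈ Finset.univ.filter (fun i : Fin m => i.val % 2 = 1), a i
      = ∑ i ∈ Finset.univ.filter (fun i : Fin m => i.val % 2 = 0), a i) ∧
    a i0 + a iL ≤
      ∑ i ∈ Finset.univ.filter (fun i : Fin m => i.val ≠ 0 ∧ i.val ≠ m-1), a i ∧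
    ∀ i, 0 ≤ a i := by
  let K : AddSubmonoid (Fin m → ℤ) :=
    { carrier := {x | (∑ i ∈ Finset.univ.filter (fun i : Fin m => i.val % 2 = 1), x i
          = ∑ i ∈ Finset.univ.filter (fun i : Fin m => i.val % 2 = 0), x i) ∧
        x i0 + x iL ≤
          ∑ i ∈ Finset.univ.filter (fun i : Fin m => i.val ≠ 0 ∧ i.val ≠ m-1), x i ∧
        ∀ i, 0 ≤ x i}
      zero_mem' := by
        refine ⟨by simp, by simp, fun i => le_refl 0⟩
      add_mem' := by
        rintro x y ⟨hx1, hx2, hx3⟩ ⟨hy1, hy2, hy3⟩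
        refine ⟨?_, ?_, fun i => add_nonneg (hx3 i) (hy3 i)⟩
        · simp only [Pi.add_apply, Finset.sum_add_distrib]
          omega
        · simp only [Pi.add_apply, Finset.sum_add_distrib]
          omega }
  exact (AddSubmonoid.closure_le (S := K)).mpr
    (fun x hx => gen_prop hm hm2 hi0 hiL hx) ha

lemma subgroup_forward (hm : 6 ≤ m) (hm2 : m % 2 = 0) {i0 iL : Fin m}
    (hi0 : i0.val = 0) (hiL : iL.val = m-1) {a : Fin m → ℤ}
    (ha : a ∈ AddSubgroup.closure ((AddSubmonoid.closure (S m) : AddSubmonoid (Fin m → ℤ)) :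
      Set (Fin m → ℤ))) :
    ∑ i ∈ Finset.univ.filter (fun i : Fin m => i.val % 2 = 1), a i
      = ∑ i ∈ Finset.univ.filter (fun i : Fin m => i.val % 2 = 0), a i := by
  let K : AddSubgroup (Fin m → ℤ) :=
    { carrier := {x | ∑ i ∈ Finset.univ.filter (fun i : Fin m => i.val % 2 = 1), x i
          = ∑ i ∈ Finset.univ.filter (fun i : Fin m => i.val % 2 = 0), x i}
      zero_mem' := by simp
      add_mem' := by
        intro x y hx hy
        simp only [Set.mem_setOf_eq, Pi.add_apply, Finset.sum_add_distrib] at *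
        omega
      neg_mem' := by
        intro x hx
        simp only [Set.mem_setOf_eq, Pi.neg_apply, Finset.sum_neg_distrib] at *
        omega }
  exact (AddSubgroup.closure_le K).mpr
    (fun x hx => (mem_prop hm hm2 hi0 hiL hx).1) ha

lemma conv_a (n : ℕ) (hn : 3 ≤ n) {i0 iL : Fin (2*n)} (hi0 : i0.val = 0)
    (hiL : iL.val = 2*n-1) (a : Fin (2*n) → ℤ)
    (heq : ∑ i ∈ Finset.univ.filter (fun i : Fin (2*n) => i.val % 2 = 1), a i
      = ∑ i ∈ Finset.univ.filter (fun i : Fin (2*n) => i.val % 2 = 0), a i) :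
    a ∈ AddSubgroup.closure
      ((AddSubmonoid.closure (S (2*n)) : AddSubmonoid (Fin (2*n) → ℤ)) :
        Set (Fin (2*n) → ℤ)) := by
  have hm : 6 ≤ 2*n := by omega
  have hm2 : (2*n) % 2 = 0 := by omega
  obtain ⟨M, hMdef⟩ : ∃ M : ℤ, M = ∑ i, |a i| := ⟨_, rfl⟩
  have hM0 : 0 ≤ M := hMdef ▸ Finset.sum_nonneg (fun i _ => abs_nonneg _)
  have habs : ∀ k, |a k| ≤ M := fun k => hMdef ▸
    Finset.single_le_sum (f := fun i => |a i|) (fun i _ => abs_nonneg _) (Finset.mem_univ k)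
  obtain ⟨d, hdk⟩ : ∃ d : Fin (2*n) → ℤ, ∀ k, d k = a k + M := ⟨_, fun _ => rfl⟩
  have hsum : ∀ s : Finset (Fin (2*n)), ∑ k ∈ s, d k = ∑ k ∈ s, a k + s.card * M := by
    intro s
    rw [Finset.sum_congr rfl (fun k _ => hdk k), Finset.sum_add_distrib, Finset.sum_const,
      nsmul_eq_mul]
  have hco : (Finset.univ.filter (fun i : Fin (2*n) => i.val % 2 = 1)).card = n :=
    card_parity n 1 (by omega)
  have hce : (Finset.univ.filter (fun i : Fin (2*n) => i.val % 2 = 0)).card = n :=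
    card_parity n 0 (by omega)
  have hcm : (Finset.univ.filter (fun i : Fin (2*n) => i.val ≠ 0 ∧ i.val ≠ 2*n-1)).card
      = 2*n-2 := card_mid hm hi0 hiL
  have hne : i0 ≠ iL := by
    intro h; have := congrArg Fin.val h; omega
  have hl : a i0 + a iL ≤ M := by
    have h1 : ∑ k ∈ ({i0, iL} : Finset (Fin (2*n))), |a k| ≤ M := hMdef ▸
      Finset.sum_le_sum_of_subset_of_nonneg (Finset.subset_univ _)
        (fun i _ _ => abs_nonneg _)
    rw [Finset.sum_pair hne] at h1
    have h2 := le_abs_self (a i0)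
    have h3 := le_abs_self (a iL)
    omega
  have hr : -M ≤ ∑ i ∈ Finset.univ.filter
      (fun i : Fin (2*n) => i.val ≠ 0 ∧ i.val ≠ 2*n-1), a i := by
    have h1 : ∑ i ∈ Finset.univ.filter
        (fun i : Fin (2*n) => i.val ≠ 0 ∧ i.val ≠ 2*n-1), (-|a i|) ≤ ∑ i ∈ Finset.univ.filter
        (fun i : Fin (2*n) => i.val ≠ 0 ∧ i.val ≠ 2*n-1), a i :=
      Finset.sum_le_sum (fun i _ => neg_abs_le _)
    have h2 : ∑ i ∈ Finset.univ.filter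
        (fun i : Fin (2*n) => i.val ≠ 0 ∧ i.val ≠ 2*n-1), |a i| ≤ M := hMdef ▸
      Finset.sum_le_sum_of_subset_of_nonneg (Finset.subset_univ _)
        (fun i _ _ => abs_nonneg _)
    rw [Finset.sum_neg_distrib] at h1
    omega
  have hd_eq : ∑ i ∈ Finset.univ.filter (fun i : Fin (2*n) => i.val % 2 = 1), d i
      = ∑ i ∈ Finset.univ.filter (fun i : Fin (2*n) => i.val % 2 = 0), d i := by
    rw [hsum, hsum, hco, hce, heq]
  have hd_lr : d i0 + d iL ≤ ∑ i ∈ Finset.univ.filter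
      (fun i : Fin (2*n) => i.val ≠ 0 ∧ i.val ≠ 2*n-1), d i := by
    rw [hsum, hcm, hdk, hdk]
    have hcast : ((2*n-2 : ℕ) : ℤ) = 2*(n:ℤ) - 2 := by omega
    rw [hcast]
    have hnn : 0 ≤ (2*(n:ℤ) - 6) * M := by
      apply mul_nonneg _ hM0
      have : (3:ℤ) ≤ (n:ℤ) := by exact_mod_cast hn
      linarith
    linarith [hl, hr, hM0, hnn]
  have hd_pos : ∀ k, 0 ≤ d k := by
    intro k
    rw [hdk]
    have h1 := habs k
    have h2 := neg_abs_le (a k)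
    omega
  have hdmem : d ∈ AddSubmonoid.closure (S (2*n)) :=
    key hm hm2 hi0 hiL ((∑ i, d i).toNat) d le_rfl hd_eq hd_lr hd_pos
  obtain ⟨c, hck⟩ : ∃ c : Fin (2*n) → ℤ, ∀ k, c k = 1 := ⟨_, fun _ => rfl⟩
  have hsumc : ∀ s : Finset (Fin (2*n)), ∑ k ∈ s, c k = s.card := by
    intro s
    rw [Finset.sum_congr rfl (fun k _ => hck k)]
    simp
  have hcmem : c ∈ AddSubmonoid.closure (S (2*n)) := by
    refine key hm hm2 hi0 hiL ((∑ i, c i).toNat) c le_rfl ?_ ?_ (fun k => by rw [hck]; norm_num)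
    · rw [hsumc, hsumc, hco, hce]
    · rw [hsumc, hcm, hck, hck]
      have hcast : ((2*n-2 : ℕ) : ℤ) = 2*(n:ℤ) - 2 := by omega
      rw [hcast]
      have : (3:ℤ) ≤ (n:ℤ) := by exact_mod_cast hn
      linarith
  have hMc : (M.toNat • c) ∈ AddSubmonoid.closure (S (2*n)) :=
    AddSubmonoid.nsmul_mem _ hcmem _
  have ha : a = d - M.toNat • c := by
    funext k
    show a k = d k - (M.toNat • c) k
    rw [hdk, Pi.smul_apply, hck, nsmul_eq_mul, mul_one, Int.toNat_of_nonneg hM0]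
    ring
  rw [ha]
  exact AddSubgroup.sub_mem _ (AddSubgroup.subset_closure hdmem)
    (AddSubgroup.subset_closure hMc)

end Stmt15X

/-- For `n ≥ 3` let `G_n` be the complete bipartite graph on the odd and even
numbers of `[2n]` with the edge `{1, 2n}` removed, and `H = H(G_n) ⊆ ℤ^{2n}` the submonoid
generated by the vectors `δ_i + δ_j` over the edges `{i,j}` of `G_n`.
Vertices `1, …, 2n` are modelled by `Fin (2*n)` via `i ↦ i + 1`; so vertex `i ∈ [2n]` is even
iff the index has odd `val`, the vertex `1` is the index `0` and the vertex `2n` is the index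
`2n - 1`.  For `a ∈ ℤ^{2n}`:
(a) `a ∈ ℤH` iff `a_e = a_o`;
(b) `a ∈ H` iff `a_e = a_o`, `ℓ(a) ≤ r(a)` and `a_i ≥ 0` for all `i`. -/
theorem stmt_15 (n : ℕ) (hn : 3 ≤ n)
    (H : AddSubmonoid (Fin (2*n) → ℤ))
    (hH : H = AddSubmonoid.closure
      {x | ∃ i j : Fin (2*n), (i.val + j.val) % 2 = 1 ∧
        ¬(i.val = 0 ∧ j.val = 2*n-1) ∧ ¬(j.val = 0 ∧ i.val = 2*n-1) ∧
        x = Pi.single i 1 + Pi.single j 1})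
    (a : Fin (2*n) → ℤ) :
    (a ∈ AddSubgroup.closure (H : Set (Fin (2*n) → ℤ)) ↔
      ∑ i ∈ Finset.univ.filter (fun i : Fin (2*n) => i.val % 2 = 1), a i
        = ∑ i ∈ Finset.univ.filter (fun i : Fin (2*n) => i.val % 2 = 0), a i) ∧
    (a ∈ H ↔
      ((∑ i ∈ Finset.univ.filter (fun i : Fin (2*n) => i.val % 2 = 1), a i
        = ∑ i ∈ Finset.univ.filter (fun i : Fin (2*n) => i.val % 2 = 0), a i) ∧
      a ⟨0, by omega⟩ + a ⟨2*n-1, by omega⟩ ≤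
        ∑ i ∈ Finset.univ.filter (fun i : Fin (2*n) => i.val ≠ 0 ∧ i.val ≠ 2*n-1), a i ∧
      ∀ i, 0 ≤ a i)) := by
  have hm : 6 ≤ 2*n := by omega
  have hm2 : (2*n) % 2 = 0 := by omega
  have hHS : H = AddSubmonoid.closure (Stmt15X.S (2*n)) := hH
  constructor
  · constructor
    · intro ha
      rw [hHS] at ha
      exact Stmt15X.subgroup_forward hm hm2 (i0 := ⟨0, by omega⟩) (iL := ⟨2*n-1, by omega⟩)
        rfl rfl ha
    · intro heq
      rw [hHS]
      exact Stmt15X.conv_a n hn (i0 := ⟨0, by omega⟩) (iL := ⟨2*n-1, by omega⟩) rfl rfl a heq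
  · constructor
    · intro haH
      rw [hHS] at haH
      exact Stmt15X.mem_prop hm hm2 (i0 := ⟨0, by omega⟩) (iL := ⟨2*n-1, by omega⟩)
        rfl rfl haH
    · rintro ⟨h1, h2, h3⟩
      rw [hHS]
      exact Stmt15X.key hm hm2 (i0 := ⟨0, by omega⟩) (iL := ⟨2*n-1, by omega⟩) rfl rfl
        ((∑ i, a i).toNat) a le_rfl h1 h2 h3
end
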